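/- arXiv:0803.0829 — 2 statements merged into one kernel-verified Lean document; each statement's English description precedes it below -/
import Mathlib

section
/- With Q_n(x,t) = Γ_n(x, -t, -2!t, ..., -(n-1)!t), the recurrence Q_{n+1}(x,t) = x·Q_n(x,t) - n!·t·Σ_{j=0}^{n-1} Q_j(x,t)/j! holds for all n ≥ 1. -/
/-- Complete Bell polynomials via the standard recurrence (equivalent to the
exponential formula). -/
noncomputable def bellΓ (x : ℕ → ℝ) : ℕ → ℝ
  | 0 => 1
  | n + 1 => ∑ j ∈ (Finset.range (n + 1)).attach,
      (n.choose j.1 : ℝ) * bellΓ x j.1 * x (n + 1 - j.1)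
  decreasing_by exact Finset.mem_range.mp j.2

/-- `Q_n(x,t) = Γ_n(x, -1!t, -2!t, …, -(n-1)!t)`. -/
noncomputable def Q (x t : ℝ) (n : ℕ) : ℝ :=
  bellΓ (fun k => if k = 1 then x else -((k - 1).factorial : ℝ) * t) n

/-! The recurrence `Γ_{n+1} = Σ_j C(n,j) Γ_j x_{n+1-j}` isolates the `j = n` term `x · Q_n`; every
other term carries `x_{n+1-j} = -(n-j)! t`, and `C(n,j) (n-j)! = n!/j!`. -/

open Finset

theorem bellΓ_succ (x : ℕ → ℝ) (n : ℕ) :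
    bellΓ x (n + 1) = ∑ j ∈ range (n + 1), (n.choose j : ℝ) * bellΓ x j * x (n + 1 - j) := by
  rw [bellΓ]
  exact sum_attach _ fun j => (n.choose j : ℝ) * bellΓ x j * x (n + 1 - j)

theorem Nat.cast_choose_mul_factorial_sub {K : Type*} [Field K] [CharZero K] {j n : ℕ}
    (h : j ≤ n) : (n.choose j : K) * (n - j).factorial = n.factorial / j.factorial := by
  rw [Nat.cast_choose K h, div_mul_eq_div_div, div_mul_cancel₀ _ (Nat.cast_ne_zero.mpr (Nat.factorial_ne_zero _))]

theorem Q_succ (x t : ℝ) (n : ℕ) :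
    Q x t (n + 1) = ∑ j ∈ range (n + 1), (n.choose j : ℝ) * Q x t j *
      (if n + 1 - j = 1 then x else -((n + 1 - j - 1).factorial : ℝ) * t) :=
  bellΓ_succ _ n

theorem Q_succ_term_of_lt (x t : ℝ) {j n : ℕ} (h : j < n) :
    (n.choose j : ℝ) * Q x t j *
      (if n + 1 - j = 1 then x else -((n + 1 - j - 1).factorial : ℝ) * t) =
      -((n.factorial : ℝ) * t * (Q x t j / j.factorial)) := by
  rw [if_neg (by omega), show n + 1 - j - 1 = n - j by omega]
  have hchoose : (n.choose j : ℝ) * (n - j).factorial = n.factorial / j.factorial :=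
    Nat.cast_choose_mul_factorial_sub h.le
  calc _ = -(t * Q x t j * ((n.choose j : ℝ) * (n - j).factorial)) := by ring
    _ = _ := by rw [hchoose]; ring

theorem Q_gamma_recurrence_general (x t : ℝ) (n : ℕ) :
    Q x t (n + 1) =
      x * Q x t n - (n.factorial : ℝ) * t * ∑ j ∈ Finset.range n, Q x t j / j.factorial := by
  rw [Q_succ, sum_range_succ, sum_congr rfl fun j hj => Q_succ_term_of_lt x t (mem_range.mp hj),
    sum_neg_distrib, ← mul_sum, Nat.choose_self, Nat.add_sub_cancel_left,
    if_pos rfl, Nat.cast_one]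
  ring

theorem Q_gamma_recurrence (x t : ℝ) (n : ℕ) (hn : 1 ≤ n) :
    Q x t (n + 1) =
      x * Q x t n - (n.factorial : ℝ) * t * ∑ j ∈ Finset.range n, Q x t j / j.factorial :=
  Q_gamma_recurrence_general x t n
end

section
/- For a standard Brownian motion W, for every n ≥ 1 and 0 ≤ s ≤ t, the conditional expectation E[H̃_n(W_t, t) | F_s] = H̃_n(W_s, s), where F is the natural filtration of W; i.e., H̃_n(W_t, t) is a martingale. -/
/-!
Since `exp (u (x + y) - (a + b) u² / 2)` is the product of the exponential generating functions
at `(x, a)` and `(y, b)`, `H̃ₙ(x + y, a + b) = ∑ₖ C(n, k) H̃ₖ(x, a) H̃ₙ₋ₖ(y, b)`; formally, both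
sides of the power-series identity solve `f' = (x + y - (a + b) u) f`, `f(0) = 1`, an equation
equivalent to the three-term recurrence. Take `x = W_s` and `y = W_t - W_s`. Given `F_s`, the
factor `H̃ₖ(W_s, s)` is known and the increment is independent of `F_s` with law `N(0, v)`,
`v = t - s`, so the conditional expectation is `∑ₖ C(n, k) H̃ₖ(W_s, s) E H̃ₙ₋ₖ(Y, v)` with
`Y ~ N(0, v)`. Here `E H̃ⱼ(Y, v) = 0` for `j ≥ 1`, because `-v φ H̃ⱼ₋₁` is an antiderivative of
`φ H̃ⱼ` for the `N(0, v)` density `φ`; only `k = n` survives.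
-/

open MeasureTheory ProbabilityTheory
open scoped NNReal

/-- Monic Hermite polynomials, `exp(ux - tu²/2) = ∑ H̃_n(x,t) uⁿ/n!`, via the
equivalent three-term recurrence. -/
noncomputable def hermiteM : ℕ → ℝ → ℝ → ℝ
  | 0, _, _ => 1
  | 1, x, _ => x
  | n + 2, x, t => x * hermiteM (n + 1) x t - (n + 1) * t * hermiteM n x t

open Finset

lemma hermiteM_succ (n : ℕ) (x t : ℝ) :
    hermiteM (n + 1) x t = x * hermiteM n x t - n * t * hermiteM (n - 1) x t := by
  cases n <;> simp [hermiteM]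

section GeneratingFunction
open PowerSeries
open scoped Nat

theorem PowerSeries.eq_of_derivative_eq_mul {R : Type*} [CommRing R] [IsAddTorsionFree R]
    {q f g : R⟦X⟧} (hf : d⁄dX R f = q * f) (hg : d⁄dX R g = q * g)
    (h0 : constantCoeff f = constantCoeff g) : f = g := by
  suffices ∀ n, ∀ k ≤ n, coeff k f = coeff k g from ext fun n => this n n le_rfl
  intro n
  induction n with
  | zero => simpa using h0
  | succ n ih =>
    intro k hk
    rcases Nat.lt_or_eq_of_le hk with hk | rfl
    · exact ih k (by omega)
    have hcoeff : coeff n (d⁄dX R f) = coeff n (d⁄dX R g) := by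
      rw [hf, hg, coeff_mul, coeff_mul]
      exact sum_congr rfl fun p hp => by
        rw [ih p.2 (HasAntidiagonal.antidiagonal.snd_le hp)]
    simp only [coeff_derivative, ← Nat.cast_succ, ← nsmul_eq_mul'] at hcoeff
    exact IsAddTorsionFree.nsmul_right_injective n.succ_ne_zero hcoeff

noncomputable def hermiteSeries (x t : ℝ) : ℝ⟦X⟧ :=
  mk fun n => hermiteM n x t / n !

lemma derivative_hermiteSeries (x t : ℝ) :
    d⁄dX ℝ (hermiteSeries x t) = (C x - C t * X) * hermiteSeries x t := by
  ext n
  rw [coeff_derivative, sub_mul, map_sub, coeff_C_mul, mul_assoc, coeff_C_mul]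
  cases n with
  | zero => simp [hermiteSeries, hermiteM]
  | succ n =>
    simp only [hermiteSeries, coeff_mk, coeff_succ_X_mul, hermiteM_succ (n + 1),
      Nat.add_sub_cancel, Nat.factorial_succ]
    push_cast
    field_simp

lemma hermiteSeries_add (x y a b : ℝ) :
    hermiteSeries (x + y) (a + b) = hermiteSeries x a * hermiteSeries y b := by
  refine eq_of_derivative_eq_mul (derivative_hermiteSeries _ _) ?_
    (by simp [hermiteSeries, hermiteM])
  rw [Derivation.leibniz, derivative_hermiteSeries, derivative_hermiteSeries, smul_eq_mul,
    smul_eq_mul, map_add, map_add]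
  ring

theorem hermiteM_add (n : ℕ) (x y a b : ℝ) :
    hermiteM n (x + y) (a + b) =
      ∑ p ∈ antidiagonal n, n.choose p.1 * hermiteM p.1 x a * hermiteM p.2 y b := by
  have h := congrArg (coeff n) (hermiteSeries_add x y a b)
  rw [coeff_mul] at h
  simp only [hermiteSeries, coeff_mk] at h
  rw [div_eq_iff (by positivity)] at h
  rw [h, sum_mul]
  refine sum_congr rfl fun p hp => ?_
  rw [← mem_antidiagonal.mp hp, Nat.choose_symm_add, ← Nat.add_choose_mul_factorial_mul_factorial]
  push_cast
  field_simp

end GeneratingFunction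

lemma exists_hermiteM_eq_eval (n : ℕ) (t : ℝ) :
    ∃ p : Polynomial ℝ, ∀ x, hermiteM n x t = p.eval x := by
  induction n using Nat.twoStepInduction with
  | zero => exact ⟨1, fun x => by simp [hermiteM]⟩
  | one => exact ⟨.X, fun x => by simp [hermiteM]⟩
  | more n ih₀ ih₁ =>
    obtain ⟨p₀, hp₀⟩ := ih₀
    obtain ⟨p₁, hp₁⟩ := ih₁
    exact ⟨.X * p₁ - .C ((n + 1) * t) * p₀, fun x => by simp [hermiteM, hp₀, hp₁]⟩

lemma hasDerivAt_hermiteM (n : ℕ) (x t : ℝ) :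
    HasDerivAt (hermiteM n · t) (n * hermiteM (n - 1) x t) x := by
  induction n using Nat.twoStepInduction generalizing x with
  | zero => simpa [hermiteM] using hasDerivAt_const x (1 : ℝ)
  | one => simpa [hermiteM] using hasDerivAt_id' x
  | more n ih₀ ih₁ =>
    refine (((hasDerivAt_id' x).mul (ih₁ x)).sub ((ih₀ x).const_mul ((n + 1) * t))).congr_deriv ?_
    rw [show n + 2 - 1 = n + 1 from rfl, Nat.add_sub_cancel, hermiteM_succ n]
    push_cast
    ring

lemma continuous_hermiteM (n : ℕ) (t : ℝ) : Continuous (hermiteM n · t) :=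
  continuous_iff_continuousAt.2 fun x => (hasDerivAt_hermiteM n x t).continuousAt

lemma Polynomial.integrable_eval_gaussianReal (p : Polynomial ℝ) (μ : ℝ) (v : ℝ≥0) :
    Integrable (fun x => p.eval x) (gaussianReal μ v) := by
  simp_rw [Polynomial.eval_eq_sum_range]
  refine integrable_finsetSum _ fun i _ => (Integrable.const_mul ?_ _)
  exact integrable_pow_of_mem_interior_integrableExpSet (X := id) (by simp) i

lemma integrable_hermiteM_gaussianReal (n : ℕ) (t μ : ℝ) (v : ℝ≥0) :
    Integrable (fun x => hermiteM n x t) (gaussianReal μ v) := by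
  obtain ⟨p, hp⟩ := exists_hermiteM_eq_eval n t
  simpa only [hp] using p.integrable_eval_gaussianReal μ v

lemma hasDerivAt_gaussianPDFReal (μ : ℝ) (v : ℝ≥0) (x : ℝ) :
    HasDerivAt (gaussianPDFReal μ v) (-((x - μ) / v) * gaussianPDFReal μ v x) x := by
  refine ((((hasDerivAt_id' x).sub_const μ).pow 2).neg.div_const (2 * v)).exp.const_mul
    (√(2 * Real.pi * v))⁻¹ |>.congr_deriv ?_
  simp only [gaussianPDFReal, Pi.neg_apply, Pi.pow_apply]
  by_cases hv : (v : ℝ) = 0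
  · simp [hv]
  · field_simp
    ring

lemma MeasureTheory.Integrable.gaussianPDFReal_mul {μ : ℝ} {v : ℝ≥0} {f : ℝ → ℝ}
    (hf : Integrable f (gaussianReal μ v)) :
    Integrable (fun x => gaussianPDFReal μ v x * f x) := by
  by_cases hv : v = 0
  · simp [hv, gaussianPDFReal_zero_var]
  rw [gaussianReal_of_var_ne_zero μ hv,
    integrable_withDensity_iff_integrable_smul' (measurable_gaussianPDF μ v)
      (ae_of_all _ fun _ => gaussianPDF_lt_top)] at hf
  simpa [toReal_gaussianPDF] using hf

lemma integral_hermiteM_gaussianReal (n : ℕ) (v : ℝ≥0) :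
    ∫ x, hermiteM n x v ∂gaussianReal 0 v = if n = 0 then 1 else 0 := by
  obtain _ | n := n
  · simp [hermiteM]
  by_cases hv : v = 0
  · simp [hv, gaussianReal_zero_var, hermiteM_succ]
  rw [if_neg n.succ_ne_zero, integral_gaussianReal_eq_integral_smul hv]
  -- `-v φ H̃ₙ` is an antiderivative of `φ H̃ₙ₊₁`, as `φ' = -(x / v) φ` and `H̃ₙ' = n H̃ₙ₋₁`.
  refine integral_eq_zero_of_hasDerivAt_of_integrable
    (f := fun x => -v * (gaussianPDFReal 0 v x * hermiteM n x v))
    (fun x => ?_) (integrable_hermiteM_gaussianReal _ _ _ _).gaussianPDFReal_mul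
    ((integrable_hermiteM_gaussianReal _ _ _ _).gaussianPDFReal_mul.const_mul _)
  refine (((hasDerivAt_gaussianPDFReal 0 v x).mul (hasDerivAt_hermiteM n x v)).const_mul
    (-(v : ℝ))).congr_deriv ?_
  rw [hermiteM_succ, smul_eq_mul]
  field_simp
  ring

namespace ProbabilityTheory
variable {Ω : Type*} {m mY mΩ : MeasurableSpace Ω} {μ : Measure Ω} {f g : Ω → ℝ}

lemma Indep.integrable_mul (hind : Indep mY m μ) (hf : Measurable[m] f) (hg : Measurable[mY] g)
    (hfi : Integrable f μ) (hgi : Integrable g μ) : Integrable (f * g) μ := by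
  have : IndepFun g f μ := (IndepFun_iff_Indep g f μ).2 <|
    indep_of_indep_of_le_right (indep_of_indep_of_le_left hind hg.comap_le) hf.comap_le
  rw [mul_comm]
  exact this.integrable_mul hgi hfi

lemma condExp_mul_of_indep [IsFiniteMeasure μ] (hm : m ≤ mΩ) (hmY : mY ≤ mΩ)
    (hind : Indep mY m μ) (hf : Measurable[m] f) (hg : Measurable[mY] g) (hfi : Integrable f μ)
    (hgi : Integrable g μ) :
    μ[f * g | m] =ᵐ[μ] fun ω => f ω * μ[g] := by
  filter_upwards [condExp_mul_of_stronglyMeasurable_left hf.stronglyMeasurable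
      (hind.integrable_mul hf hg hfi hgi) hgi,
    condExp_indep_eq hmY hm hg.stronglyMeasurable hind] with ω h₁ h₂
  rw [h₁, Pi.mul_apply, h₂]

end ProbabilityTheory

section
variable {Ω : Type*} {m mΩ : MeasurableSpace Ω} {μ : Measure Ω}

lemma ProbabilityTheory.HasLaw.integrable_hermiteM {X : Ω → ℝ} {c : ℝ} {w : ℝ≥0}
    (hX : HasLaw X (gaussianReal c w) μ) (n : ℕ) (t : ℝ) :
    Integrable (fun ω => hermiteM n (X ω) t) μ := by
  have h := integrable_hermiteM_gaussianReal n t c w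
  rw [← hX.map_eq] at h
  exact (integrable_map_measure (continuous_hermiteM n t).aestronglyMeasurable
    hX.aemeasurable).1 h

lemma ProbabilityTheory.HasLaw.integral_hermiteM {Y : Ω → ℝ} {b : ℝ≥0}
    (hY : HasLaw Y (gaussianReal 0 b) μ) (n : ℕ) :
    ∫ ω, hermiteM n (Y ω) b ∂μ = if n = 0 then 1 else 0 :=
  (hY.integral_comp (continuous_hermiteM n b).aestronglyMeasurable).trans
    (integral_hermiteM_gaussianReal n b)

theorem condExp_hermiteM_add_of_indep [IsProbabilityMeasure μ]
    (hm : m ≤ mΩ) {X Y : Ω → ℝ} {c a : ℝ} {w b : ℝ≥0} (hXm : Measurable[m] X)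
    (hX : HasLaw X (gaussianReal c w) μ) (hYm : Measurable Y) (hY : HasLaw Y (gaussianReal 0 b) μ)
    (hind : Indep (MeasurableSpace.comap Y inferInstance) m μ) (n : ℕ) :
    μ[fun ω => hermiteM n (X ω + Y ω) (a + b) | m] =ᵐ[μ] fun ω => hermiteM n (X ω) a := by
  set f : ℕ × ℕ → Ω → ℝ := fun p ω => n.choose p.1 * hermiteM p.1 (X ω) a
  set g : ℕ × ℕ → Ω → ℝ := fun p ω => hermiteM p.2 (Y ω) b
  have hfm : ∀ p, Measurable[m] (f p) := fun p =>
    ((continuous_hermiteM p.1 a).measurable.comp hXm).const_mul _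
  have hgm : ∀ p, Measurable[MeasurableSpace.comap Y inferInstance] (g p) := fun p =>
    (continuous_hermiteM p.2 b).measurable.comp (comap_measurable Y)
  have hfi : ∀ p, Integrable (f p) μ := fun p => (hX.integrable_hermiteM p.1 a).const_mul _
  have hgi : ∀ p, Integrable (g p) μ := fun p => hY.integrable_hermiteM p.2 b
  have hsplit : (fun ω => hermiteM n (X ω + Y ω) (a + b)) = ∑ p ∈ antidiagonal n, f p * g p := by
    ext ω
    simp [f, g, hermiteM_add, Finset.sum_apply]
  rw [hsplit]
  have hint : ∀ p ∈ antidiagonal n, Integrable (f p * g p) μ :=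
    fun p _ => hind.integrable_mul (hfm p) (hgm p) (hfi p) (hgi p)
  have hterm : ∀ p ∈ antidiagonal n, μ[f p * g p | m] =ᵐ[μ] fun ω => f p ω * μ[g p] :=
    fun p _ => condExp_mul_of_indep hm hYm.comap_le hind (hfm p) (hgm p) (hfi p) (hgi p)
  refine (condExp_finsetSum hint m).trans ((eventuallyEq_sum hterm).trans (.of_forall fun ω => ?_))
  simp only [Finset.sum_apply, g, hY.integral_hermiteM, mul_ite, mul_one, mul_zero]
  rw [Finset.sum_eq_single_of_mem (n, 0) (by simp) fun p hp hpn => if_neg ?_]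
  · simp [f]
  · exact fun h => hpn (Prod.ext (by rwa [HasAntidiagonal.mem_antidiagonal, h, add_zero] at hp) h)

end

theorem hermite_of_brownian_is_martingale_general
    {Ω : Type*} {mΩ : MeasurableSpace Ω} (μ : Measure Ω) [IsProbabilityMeasure μ]
    (W : ℝ≥0 → Ω → ℝ) (hW : ∀ t, StronglyMeasurable (W t))
    (h0 : ∀ᵐ ω ∂μ, W 0 ω = 0)
    (hgauss : ∀ s t : ℝ≥0, s ≤ t →
      Measure.map (fun ω => W t ω - W s ω) μ = gaussianReal 0 (t - s))
    (hindep : ∀ s t : ℝ≥0, s ≤ t →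
      Indep (MeasurableSpace.comap (fun ω => W t ω - W s ω) (borel ℝ))
        (MeasureTheory.Filtration.natural W hW s) μ)
    (n : ℕ) (s t : ℝ≥0) (hst : s ≤ t) :
    μ[fun ω => hermiteM n (W t ω) (t : ℝ) | MeasureTheory.Filtration.natural W hW s]
      =ᵐ[μ] fun ω => hermiteM n (W s ω) (s : ℝ) := by
  have hincr_meas : Measurable fun ω => W t ω - W s ω := (hW t).measurable.sub (hW s).measurable
  have hincr_law : HasLaw (fun ω => W t ω - W s ω) (gaussianReal 0 (t - s)) μ :=
    ⟨hincr_meas.aemeasurable, hgauss s t hst⟩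
  have hWs_law : HasLaw (W s) (gaussianReal 0 s) μ := by
    have hWs : (fun ω => W s ω - W 0 ω) =ᵐ[μ] W s := h0.mono fun ω hω => by simp [hω]
    refine ⟨(hW s).measurable.aemeasurable, ?_⟩
    rw [← Measure.map_congr hWs, hgauss 0 s zero_le, tsub_zero]
  have key := condExp_hermiteM_add_of_indep (Filtration.le _ s)
    (Filtration.stronglyAdapted_natural hW s).measurable hWs_law hincr_meas hincr_law
    (hindep s t hst) n (a := s)
  have ht : (s : ℝ) + (t - s : ℝ≥0) = t := by rw [NNReal.coe_sub hst]; ring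
  simpa [ht] using key

/-- For a standard Brownian motion `W` (centered, `W 0 = 0`, independent Gaussian
increments `W t - W s ~ N(0, t-s)`), the process `H̃_n(W_t, t)` is a martingale with
respect to the natural filtration of `W`. -/
theorem hermite_of_brownian_is_martingale
    {Ω : Type*} {mΩ : MeasurableSpace Ω} (μ : Measure Ω) [IsProbabilityMeasure μ]
    (W : ℝ≥0 → Ω → ℝ) (hW : ∀ t, StronglyMeasurable (W t))
    (h0 : ∀ᵐ ω ∂μ, W 0 ω = 0)
    (hgauss : ∀ s t : ℝ≥0, s ≤ t →
      Measure.map (fun ω => W t ω - W s ω) μ = gaussianReal 0 (t - s))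
    (hindep : ∀ s t : ℝ≥0, s ≤ t →
      Indep (MeasurableSpace.comap (fun ω => W t ω - W s ω) (borel ℝ))
        (MeasureTheory.Filtration.natural W hW s) μ)
    (n : ℕ) (hn : 1 ≤ n) (s t : ℝ≥0) (hst : s ≤ t) :
    μ[fun ω => hermiteM n (W t ω) (t : ℝ) | MeasureTheory.Filtration.natural W hW s]
      =ᵐ[μ] fun ω => hermiteM n (W s ω) (s : ℝ) :=
  hermite_of_brownian_is_martingale_general (mΩ := mΩ) μ W hW h0 hgauss hindep n s t hst
end
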